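/- Let (G,H) satisfy the 2-glove conditions with F₁ ∩ F₂ = ∅. Fix i ∈ {1,2} and a subset F₃ ⊆ Γ. If k ∉ F₃, then |F₃ ∖ Fᵢ| is even if and only if Σ_{j ∈ F₃} G_{ij} = Σ_{j ∈ F₃} H_{ij} (sums mod 2). -/
import Mathlib


open Finset

/-- The 2-glove membership conditions. -/
def IsGlove {n : ℕ} (F : Fin 2 → Finset (Fin n)) (b : Fin 2 → Fin n → ZMod 2)
    (b3 : Fin n → ZMod 2) (G H : Fin 2 → Fin n → ZMod 2) : Prop :=
  (∀ i, ∑ j, G i j = 0) ∧ (∀ i, ∑ j, H i j = 0) ∧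
  (∀ i, ∀ j ∈ F i, G i j = b i j ∧ H i j = b i j) ∧
  (∀ i, ∀ j, j ∉ F i → G i j + H i j = 1) ∧
  (∀ j, j ∉ F 0 ∪ F 1 → G 0 j + G 1 j = b3 j)

/-- Lemma 3, part 1 (case `k ∉ F₃`): `|F₃ ∖ Fᵢ|` is even iff the row-`i` partial sums
of `G` and `H` over `F₃` agree. -/
theorem glove_parity_even_iff {n : ℕ}
    (F : Fin 2 → Finset (Fin n)) (b : Fin 2 → Fin n → ZMod 2) (b3 : Fin n → ZMod 2)
    (G H : Fin 2 → Fin n → ZMod 2) (hdisj : Disjoint (F 0) (F 1))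
    (hGH : IsGlove F b b3 G H) (i : Fin 2) (F3 : Finset (Fin n))
    (k : Fin n) (hk : k ∉ F3) :
    Even ((F3 \ F i).card) ↔ ∑ j ∈ F3, G i j = ∑ j ∈ F3, H i j := by
  obtain ⟨-, -, hF, hnF, -⟩ := hGH
  have key : ∑ j ∈ F3, G i j + ∑ j ∈ F3, H i j = ((F3 \ F i).card : ZMod 2) := by
    rw [← Finset.sum_add_distrib]
    rw [← Finset.sum_sdiff (Finset.inter_subset_left (s₂ := F i))]
    have h1 : ∑ j ∈ F3 ∩ F i, (G i j + H i j) = 0 := by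
      apply Finset.sum_eq_zero
      intro j hj
      obtain ⟨hg, hh⟩ := hF i j (Finset.mem_inter.mp hj).2
      rw [hg, hh]
      exact (CharTwo.add_self_eq_zero _)
    have h2 : ∑ j ∈ F3 \ (F3 ∩ F i), (G i j + H i j) = ((F3 \ F i).card : ZMod 2) := by
      have : F3 \ (F3 ∩ F i) = F3 \ F i := by
        ext x; simp [Finset.mem_sdiff, Finset.mem_inter]
      rw [this, Finset.sum_congr rfl (fun j hj => hnF i j (Finset.mem_sdiff.mp hj).2)]
      simp [Finset.sum_const]
    rw [h1, h2, add_zero]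
  have hcast : ((F3 \ F i).card : ZMod 2) = 0 ↔ Even (F3 \ F i).card := by
    rw [ZMod.natCast_eq_zero_iff]
    exact (even_iff_two_dvd).symm
  constructor
  · intro he
    rw [← hcast] at he
    rw [he] at key
    have h := CharTwo.add_eq_iff_eq_add.mp key
    simpa using h
  · intro heq
    rw [heq, CharTwo.add_self_eq_zero] at key
    exact hcast.mp key.symm
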